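/- For any two old nodes i, j of G, the hitting time of the simple random walk on R_q(G) from i to j equals (4q+2)/(q+2) times the hitting time from i to j on G: T̃_{ij} = ((4q+2)/(q+2))·T_{ij}. -/

import Mathlib

open scoped Classical

/-- The `q`-triangulation graph `R_q(G)`: for each edge `e` of `G` we add `q` new
nodes (indexed by `G.edgeSet × Fin q`), each adjacent exactly to the two endpoints of `e`. -/
noncomputable def qTriangulation {V : Type} (G : SimpleGraph V) (q : ℕ) :
    SimpleGraph (V ⊕ (G.edgeSet × Fin q)) where
  Adj x y :=
    match x, y with
    | Sum.inl a, Sum.inl b => G.Adj a b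
    | Sum.inl a, Sum.inr p => a ∈ (p.1 : Sym2 V)
    | Sum.inr p, Sum.inl b => b ∈ (p.1 : Sym2 V)
    | Sum.inr _, Sum.inr _ => False
  symm := by
    refine ⟨?_⟩
    rintro (a | p) (b | p') h
    · exact h.symm
    · exact h
    · exact h
    · exact h.elim
  loopless := by
    refine ⟨?_⟩
    rintro (a | p) h
    · exact G.irrefl h
    · exact h

/-- `T` is the table of hitting times of the simple random walk on `H`:
`T j j = 0` and, for `i ≠ j`, `T i j = 1 + (∑_{k ~ i} T k j)/deg(i)`
(first-step analysis; for a connected graph this system has a unique solution,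
namely the expected first-passage times). -/
def IsHittingTime {W : Type} [Fintype W] (H : SimpleGraph W) (T : W → W → ℝ) : Prop :=
  (∀ j, T j j = 0) ∧
    ∀ i j, i ≠ j → T i j = 1 + (∑ k ∈ H.neighborFinset i, T k j) / (H.degree i : ℝ)

namespace QTriAux

open Finset
set_option linter.unusedSectionVars false

/-! ### A maximum principle for discretely harmonic functions -/

lemma walkAux {W : Type} [Fintype W] (H : SimpleGraph W) (D : W → ℝ) (M : ℝ)
    (hMle : ∀ y, D y ≤ M) :
    ∀ {u j : W}, H.Walk u j → D j = 0 →
      (∀ i, i ≠ j → D i = (∑ k ∈ H.neighborFinset i, D k) / (H.degree i : ℝ)) →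
      M = D u → M ≤ 0 := by
  intro u j w
  induction w with
  | nil => intro hj _ h; rw [hj] at h; exact h.le
  | @cons u v j huv p ih =>
    intro hj hh h
    by_cases huj : u = j
    · rw [huj, hj] at h; exact h.le
    · refine ih hj hh ?_
      have hv : v ∈ H.neighborFinset u := (H.mem_neighborFinset u v).2 huv
      have hdpos : 0 < (H.degree u : ℝ) := by
        have : 0 < H.degree u := by
          rw [← H.card_neighborFinset_eq_degree]
          exact Finset.card_pos.2 ⟨v, hv⟩
        exact_mod_cast this
      have hsum : ∑ k ∈ H.neighborFinset u, D k = (H.degree u : ℝ) * M := by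
        have h2 := hh u huj
        rw [← h] at h2
        field_simp at h2
        linarith [h2]
      have hzero : ∑ k ∈ H.neighborFinset u, (M - D k) = 0 := by
        rw [Finset.sum_sub_distrib, hsum, Finset.sum_const,
          H.card_neighborFinset_eq_degree, nsmul_eq_mul]
        ring
      have := (Finset.sum_eq_zero_iff_of_nonneg
        (fun k _ => sub_nonneg.2 (hMle k))).1 hzero v hv
      linarith

lemma maxP {W : Type} [Fintype W] (H : SimpleGraph W) (j : W) (D : W → ℝ)
    (hj : D j = 0)
    (hh : ∀ i, i ≠ j → D i = (∑ k ∈ H.neighborFinset i, D k) / (H.degree i : ℝ))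
    (hreach : ∀ x, H.Reachable x j) (x : W) : D x ≤ 0 := by
  have hne : (Finset.univ : Finset W).Nonempty := ⟨x, mem_univ x⟩
  have hMle : ∀ y, D y ≤ Finset.univ.sup' hne D := fun y => Finset.le_sup' D (mem_univ y)
  refine le_trans (hMle x) ?_
  obtain ⟨x0, -, hx0⟩ := Finset.exists_mem_eq_sup' hne D
  obtain ⟨w⟩ := hreach x0
  exact walkAux H D _ hMle w hj hh hx0

lemma harmonicZero {W : Type} [Fintype W] (H : SimpleGraph W) (j : W) (D : W → ℝ)
    (hj : D j = 0)
    (hh : ∀ i, i ≠ j → D i = (∑ k ∈ H.neighborFinset i, D k) / (H.degree i : ℝ))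
    (hreach : ∀ x, H.Reachable x j) (x : W) : D x = 0 := by
  have h1 := maxP H j D hj hh hreach x
  have h2 := maxP H j (fun y => -D y) (by simp [hj])
    (fun i hij => by rw [Finset.sum_neg_distrib, neg_div, ← hh i hij]) hreach x
  simp only [neg_nonpos] at h2
  linarith

/-! ### Neighborhood structure of the triangulation -/

variable {V : Type} [Fintype V] (G : SimpleGraph V) (q : ℕ)

@[simp] lemma qTri_adj_inl_inl (a b : V) :
    (qTriangulation G q).Adj (Sum.inl a) (Sum.inl b) ↔ G.Adj a b := Iff.rfl
@[simp] lemma qTri_adj_inl_inr (a : V) (p : G.edgeSet × Fin q) :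
    (qTriangulation G q).Adj (Sum.inl a) (Sum.inr p) ↔ a ∈ (p.1 : Sym2 V) := Iff.rfl
@[simp] lemma qTri_adj_inr_inl (b : V) (p : G.edgeSet × Fin q) :
    (qTriangulation G q).Adj (Sum.inr p) (Sum.inl b) ↔ b ∈ (p.1 : Sym2 V) := Iff.rfl
@[simp] lemma qTri_adj_inr_inr (p p' : G.edgeSet × Fin q) :
    (qTriangulation G q).Adj (Sum.inr p) (Sum.inr p') ↔ False := Iff.rfl

lemma sum_nf {W : Type} [Fintype W] (H : SimpleGraph W) (x : W) (g : W → ℝ) :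
    ∑ y ∈ H.neighborFinset x, g y = ∑ y : W, if H.Adj x y then g y else 0 := by
  rw [← Finset.sum_filter]
  congr 1
  ext y
  simp

lemma sum_edges_inc (i : V) (F : Sym2 V → ℝ) :
    ∑ e : G.edgeSet, (if i ∈ (e : Sym2 V) then F (e : Sym2 V) else 0)
      = ∑ k ∈ G.neighborFinset i, F s(i, k) := by
  rw [Finset.sum_set_coe (f := fun e => if i ∈ e then F e else 0), ← Finset.sum_filter]
  have himg : (G.edgeSet.toFinset.filter (fun e => i ∈ e))
      = (G.neighborFinset i).image (fun k => s(i, k)) := by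
    ext e
    simp only [Finset.mem_filter, Set.mem_toFinset, Finset.mem_image,
      SimpleGraph.mem_neighborFinset]
    constructor
    · rintro ⟨he, hie⟩
      exact ⟨Sym2.Mem.other hie, G.mem_edgeSet.1 (by rwa [Sym2.other_spec hie]),
        Sym2.other_spec hie⟩
    · rintro ⟨k, hk, rfl⟩
      exact ⟨G.mem_edgeSet.2 hk, Sym2.mem_mk_left i k⟩
  rw [himg, Finset.sum_image (fun x _ y _ h => Sym2.congr_right.mp h)]

lemma sum_nbhd_inl (i : V) (f : V → ℝ) (F : Sym2 V → ℝ) :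
    ∑ y ∈ (qTriangulation G q).neighborFinset (Sum.inl i),
        Sum.elim f (fun p => F (p.1 : Sym2 V)) y
      = ∑ k ∈ G.neighborFinset i, (f k + q * F s(i, k)) := by
  rw [sum_nf, Fintype.sum_sum_type]
  simp only [Sum.elim_inl, Sum.elim_inr, qTri_adj_inl_inl, qTri_adj_inl_inr]
  rw [Fintype.sum_prod_type]
  simp only [Finset.sum_const, Finset.card_univ, Fintype.card_fin, nsmul_eq_mul]
  rw [← Finset.mul_sum, sum_edges_inc, ← sum_nf G i f, Finset.sum_add_distrib,
    Finset.mul_sum]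

lemma sum_nbhd_inr (a b : V) (p : G.edgeSet × Fin q)
    (hp : (p.1 : Sym2 V) = s(a, b)) (hab : a ≠ b)
    (g : (V ⊕ (G.edgeSet × Fin q)) → ℝ) :
    ∑ y ∈ (qTriangulation G q).neighborFinset (Sum.inr p), g y
      = g (Sum.inl a) + g (Sum.inl b) := by
  rw [sum_nf, Fintype.sum_sum_type]
  simp only [qTri_adj_inr_inl, qTri_adj_inr_inr, if_false, Finset.sum_const_zero, add_zero, hp,
    Sym2.mem_iff]
  rw [show (∑ x : V, if x = a ∨ x = b then g (Sum.inl x) else 0)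
      = ∑ x ∈ ({a, b} : Finset V), g (Sum.inl x) by
    rw [← Finset.sum_filter]; congr 1; ext x; simp]
  rw [Finset.sum_pair hab]

lemma deg_real {W : Type} [Fintype W] (H : SimpleGraph W) (x : W) :
    (H.degree x : ℝ) = ∑ _y ∈ H.neighborFinset x, (1 : ℝ) := by
  rw [Finset.sum_const, H.card_neighborFinset_eq_degree, nsmul_eq_mul, mul_one]

lemma deg_inl (i : V) :
    ((qTriangulation G q).degree (Sum.inl i) : ℝ) = (G.degree i : ℝ) * ((q : ℝ) + 1) := by
  have h2 := sum_nbhd_inl G q i (fun _ => (1 : ℝ)) (fun _ => (1 : ℝ))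
  rw [deg_real]
  have h1 : ∑ _y ∈ (qTriangulation G q).neighborFinset (Sum.inl i), (1 : ℝ)
      = ∑ y ∈ (qTriangulation G q).neighborFinset (Sum.inl i),
          Sum.elim (fun _ : V => (1 : ℝ))
            (fun p : G.edgeSet × Fin q => (fun _ : Sym2 V => (1 : ℝ)) (p.1 : Sym2 V)) y :=
    Finset.sum_congr rfl (fun y _ => by cases y <;> rfl)
  rw [h1, h2, Finset.sum_const, G.card_neighborFinset_eq_degree, nsmul_eq_mul]
  ring

lemma deg_inr (a b : V) (p : G.edgeSet × Fin q)
    (hp : (p.1 : Sym2 V) = s(a, b)) (hab : a ≠ b) :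
    ((qTriangulation G q).degree (Sum.inr p) : ℝ) = 2 := by
  rw [deg_real, sum_nbhd_inr G q a b p hp hab (fun _ => (1:ℝ))]
  norm_num

lemma edge_rep (e : Sym2 V) (he : e ∈ G.edgeSet) : ∃ a b : V, e = s(a, b) ∧ G.Adj a b := by
  induction e using Sym2.ind with
  | _ a b => exact ⟨a, b, rfl, G.mem_edgeSet.1 he⟩

end QTriAux

open QTriAux Finset in
/-- For any two old nodes `i, j` of `G`, the hitting time of the simple
random walk on `R_q(G)` satisfies `T̃_{ij} = ((4q+2)/(q+2))·T_{ij}`. -/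
theorem hittingTime_qTriangulation_old_old {V : Type} [Fintype V]
    (G : SimpleGraph V) (hG : G.Connected) (q : ℕ) (hq : 0 < q)
    (T : V → V → ℝ) (hT : IsHittingTime G T)
    (T' : (V ⊕ (G.edgeSet × Fin q)) → (V ⊕ (G.edgeSet × Fin q)) → ℝ)
    (hT' : IsHittingTime (qTriangulation G q) T') :
    ∀ i j : V, T' (Sum.inl i) (Sum.inl j) = (4 * (q : ℝ) + 2) / ((q : ℝ) + 2) * T i j := by
  intro i j
  obtain ⟨hT0, hTe⟩ := hT
  obtain ⟨hT'0, hT'e⟩ := hT'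
  set c : ℝ := (4 * (q : ℝ) + 2) / ((q : ℝ) + 2) with hc
  have hq2 : ((q : ℝ) + 2) ≠ 0 := by positivity
  set F : Sym2 V → ℝ :=
    Sym2.lift ⟨fun a b => 1 + (c * T a j + c * T b j) / 2, fun a b => by ring⟩ with hF
  set g : (V ⊕ (G.edgeSet × Fin q)) → ℝ :=
    Sum.elim (fun k => c * T k j) (fun p => F (p.1 : Sym2 V)) with hg
  -- the candidate `g` satisfies the same linear system as `T' · (Sum.inl j)`
  have hgeq : ∀ x, x ≠ Sum.inl j →
      g x = 1 + (∑ k ∈ (qTriangulation G q).neighborFinset x, g k)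
        / ((qTriangulation G q).degree x : ℝ) := by
    rintro (a | p) hx
    · -- old vertex
      have haj : a ≠ j := fun h => hx (by rw [h])
      have hdeg : 0 < (G.degree a : ℝ) := by
        have : ∃ k, G.Adj a k := by
          obtain ⟨w⟩ := hG.preconnected a j
          cases w with
          | nil => exact absurd rfl haj
          | cons h _ => exact ⟨_, h⟩
        obtain ⟨k, hk⟩ := this
        have : 0 < G.degree a := by
          rw [← G.card_neighborFinset_eq_degree]
          exact Finset.card_pos.2 ⟨k, (G.mem_neighborFinset a k).2 hk⟩
        exact_mod_cast this
      set d : ℝ := (G.degree a : ℝ) with hd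
      set S : ℝ := ∑ k ∈ G.neighborFinset a, T k j with hSdef
      have hTa : T a j = 1 + S / d := hTe a j haj
      have hS : S = d * (T a j - 1) := by rw [hTa]; field_simp; ring
      have hsum : ∑ k ∈ (qTriangulation G q).neighborFinset (Sum.inl a), g k
          = (c + q * c / 2) * S + d * ((q : ℝ) + q * (c * T a j) / 2) := by
        rw [hg, sum_nbhd_inl G q a (fun k => c * T k j) F]
        have : ∀ k ∈ G.neighborFinset a,
            c * T k j + (q : ℝ) * F s(a, k)
              = (c + q * c / 2) * T k j + ((q : ℝ) + q * (c * T a j) / 2) := by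
          intro k _
          rw [hF, Sym2.lift_mk]
          ring
        rw [Finset.sum_congr rfl this, Finset.sum_add_distrib, ← Finset.mul_sum,
          Finset.sum_const, G.card_neighborFinset_eq_degree, nsmul_eq_mul, ← hSdef, ← hd]
      rw [hsum, deg_inl G q a, ← hd]
      show c * T a j = _
      rw [hS, hc]
      have hq1 : (q : ℝ) + 1 ≠ 0 := by positivity
      field_simp
      ring
    · -- subdivision vertex
      obtain ⟨a, b, hp, hadj⟩ := edge_rep G (p.1 : Sym2 V) p.1.2
      have hab : a ≠ b := hadj.ne
      rw [sum_nbhd_inr G q a b p hp hab, deg_inr G q a b p hp hab]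
      show F (p.1 : Sym2 V) = _
      rw [hp, hF, Sym2.lift_mk]
      show _ = 1 + (c * T a j + c * T b j) / 2
      ring
  -- reachability in the triangulation
  let hom : G →g qTriangulation G q := ⟨Sum.inl, fun {a b} h => h⟩
  have hreach : ∀ x, (qTriangulation G q).Reachable x (Sum.inl j) := by
    rintro (a | p)
    · exact SimpleGraph.Reachable.map hom (hG.preconnected a j)
    · obtain ⟨a, b, hp, hadj⟩ := edge_rep G (p.1 : Sym2 V) p.1.2
      have hmem : a ∈ (p.1 : Sym2 V) := by rw [hp]; exact Sym2.mem_mk_left a b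
      have hadj' : (qTriangulation G q).Adj (Sum.inr p) (Sum.inl a) := hmem
      exact hadj'.reachable.trans (SimpleGraph.Reachable.map hom (hG.preconnected a j))
  -- uniqueness via the maximum principle
  have hzero := harmonicZero (qTriangulation G q) (Sum.inl j)
    (fun x => T' x (Sum.inl j) - g x)
    (by
      show T' (Sum.inl j) (Sum.inl j) - g (Sum.inl j) = 0
      have hgj : g (Sum.inl j) = c * T j j := rfl
      rw [hT'0, hgj, hT0, mul_zero, sub_zero])
    (fun x hx => by
      show T' x (Sum.inl j) - g x
        = (∑ k ∈ (qTriangulation G q).neighborFinset x, (T' k (Sum.inl j) - g k))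
          / ((qTriangulation G q).degree x : ℝ)
      rw [hT'e x (Sum.inl j) hx, hgeq x hx, Finset.sum_sub_distrib]
      ring)
    hreach (Sum.inl i)
  have hzero' : T' (Sum.inl i) (Sum.inl j) - g (Sum.inl i) = 0 := hzero
  have hgi : g (Sum.inl i) = c * T i j := rfl
  rw [hgi] at hzero'
  linarith
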